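/- Let J be a finite set of integers all ≥ 3, and let characters a_J = (a_j)_{j∈J} and b_J = (b_j)_{j∈J} of G_J = ⊕_{j∈J} ℤ/2^j satisfy ∑_{j∈J} ∑_{t∈T_j} ω_j^{a_j t} = ∑_{j∈J} ∑_{t∈T_j} ω_j^{b_j t}. Then for every j ∈ J, a_j and b_j have the same parity; consequently a_J(t) = b_J(t) for every involution t ∈ G_J. -/

import Mathlib

open Complex

/-- `ω_j = exp(2πi/2^j)`, a primitive `2^j`-th root of unity. -/
noncomputable def omega (j : ℕ) : ℂ := Complex.exp (2 * Real.pi * Complex.I / 2 ^ j)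

/-- The connection set `T_j = {±(2i+1) mod 2^j : 0 ≤ i < 2^(j-3)}` in `ℤ/2^j`. -/
def Tset (j : ℕ) : Finset (ZMod (2 ^ j)) :=
  (Finset.range (2 ^ (j - 3))).image (fun i => ((2 * i + 1 : ℕ) : ZMod (2 ^ j))) ∪
    (Finset.range (2 ^ (j - 3))).image (fun i => -((2 * i + 1 : ℕ) : ZMod (2 ^ j)))

/-- The character sum `∑_{t ∈ T_j} ω_j^(a·t)`. -/
noncomputable def charSum (j : ℕ) (a : ZMod (2 ^ j)) : ℂ :=
  ∑ t ∈ Tset j, omega j ^ ((a * t).val)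

/-!
Put `N = max J` and `ζ = ω_N`, so that each side of the hypothesis is a sum of powers `ζ^e` with
`e = 2^(N-j) (a_j t)`. As `ζ^(2^(N-1)) = -1` and `1, ζ, …, ζ^(2^(N-1)-1)` are linearly independent
over `ℚ`, the number of exponents in any residue class mod `2^(N-1)` has the same parity on both
sides. In the class of `2^(N-j₀)`, level `j` contributes the `t ∈ T_j` with
`a_j t ≡ 2^(j-j₀) mod 2^(j-1)` (none if `j < j₀`). Reduction mod `2^(j-1)` maps `T_j` bijectively
onto the odd residues, and the number of odd `s` with `a s = c` is odd iff `a` and `c` are both odd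
(for even `a` the solutions pair up under `s ↦ s + 2^(j-2)`). So the count is odd iff `a_{j₀}` is.
Finally, if `a_j ≡ b_j mod 2` and `2 g_j = 0` then `a_j g_j = b_j g_j`.
-/

open Finset

theorem isPrimitiveRoot_omega (N : ℕ) : IsPrimitiveRoot (omega N) (2 ^ N) := by
  simpa [omega] using Complex.isPrimitiveRoot_exp (2 ^ N) (NeZero.ne _)

theorem omega_pow_two_pow_sub {j N : ℕ} (h : j ≤ N) : omega N ^ 2 ^ (N - j) = omega j := by
  obtain ⟨d, rfl⟩ := Nat.exists_eq_add_of_le h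
  rw [omega, omega, ← Complex.exp_nat_mul, Nat.add_sub_cancel_left, pow_add]
  push_cast
  field_simp

theorem sum_charSum_eq_sum_sigma {J : Finset ℕ} {N : ℕ} (hJN : ∀ j ∈ J, j ≤ N)
    (x : (j : ℕ) → ZMod (2 ^ j)) :
    ∑ j ∈ J, charSum j (x j) =
      ∑ p ∈ J.sigma Tset, omega N ^ (2 ^ (N - p.1) * (x p.1 * p.2).val) := by
  rw [sum_sigma]
  refine sum_congr rfl fun j hj => sum_congr rfl fun t _ => ?_
  rw [pow_mul, omega_pow_two_pow_sub (hJN j hj)]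

def signedCount {ι : Type*} (n : ℕ) (s : Finset ι) (e : ι → ℕ) (k : ℕ) : ℤ :=
  ∑ i ∈ s with e i % 2 ^ n = k, (-1) ^ (e i / 2 ^ n)

theorem natCast_card_filter_eq_signedCount {ι : Type*} (n : ℕ) (s : Finset ι) (e : ι → ℕ)
    (k : ℕ) : (#{i ∈ s | e i % 2 ^ n = k} : ZMod 2) = signedCount n s e k := by
  simp [signedCount, ZMod.neg_eq_self_mod_two]

theorem signedCount_of_le {ι : Type*} {n : ℕ} (s : Finset ι) (e : ι → ℕ) {k : ℕ}
    (hk : 2 ^ n ≤ k) : signedCount n s e k = 0 := by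
  refine sum_eq_zero fun i hi => absurd (mem_filter.1 hi).2 ?_
  have := Nat.mod_lt (e i) (show 0 < 2 ^ n by positivity)
  omega

namespace IsPrimitiveRoot

theorem pow_two_pow_eq_neg_one {R : Type*} [CommRing R] [IsDomain R] {ζ : R} {n : ℕ}
    (hζ : IsPrimitiveRoot ζ (2 ^ (n + 1))) : ζ ^ 2 ^ n = -1 :=
  (hζ.pow (by positivity) (pow_succ 2 n)).eq_neg_one_of_two_right

theorem eq_zero_of_sum_pow_eq_zero {K : Type*} [Field K] [CharZero K] {ζ : K} {n : ℕ}
    (hζ : IsPrimitiveRoot ζ (2 ^ (n + 1))) {c : ℕ → ℤ}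
    (h : ∑ k ∈ range (2 ^ n), (c k : K) * ζ ^ k = 0) {k : ℕ} (hk : k < 2 ^ n) : c k = 0 := by
  have hdeg : (minpoly ℚ ζ).natDegree = 2 ^ n := by
    rw [← Polynomial.cyclotomic_eq_minpoly_rat hζ (by positivity), Polynomial.natDegree_cyclotomic,
      Nat.totient_prime_pow_succ Nat.prime_two]
    simp
  have hli := linearIndependent_pow (K := ℚ) ζ
  rw [hdeg] at hli
  have := Fintype.linearIndependent_iff.mp hli (fun i => (c i : ℚ)) (by
    rw [← h, ← Fin.sum_univ_eq_sum_range (fun k => (c k : K) * ζ ^ k)]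
    simp [Rat.smul_def])
  exact_mod_cast this ⟨k, hk⟩

theorem sum_pow_eq_sum_signedCount {R : Type*} [CommRing R] [IsDomain R] {ζ : R} {n : ℕ}
    (hζ : IsPrimitiveRoot ζ (2 ^ (n + 1))) {ι : Type*} (s : Finset ι) (e : ι → ℕ) :
    ∑ i ∈ s, ζ ^ e i = ∑ k ∈ range (2 ^ n), (signedCount n s e k : R) * ζ ^ k := by
  rw [← sum_fiberwise_of_maps_to (g := fun i => e i % 2 ^ n) (t := range (2 ^ n))
    fun i _ => mem_range.2 (Nat.mod_lt _ (by positivity))]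
  refine sum_congr rfl fun k _ => ?_
  rw [signedCount, Int.cast_sum, sum_mul]
  refine sum_congr rfl fun i hi => ?_
  rw [← (mem_filter.1 hi).2, Int.cast_pow, Int.cast_neg, Int.cast_one, ← hζ.pow_two_pow_eq_neg_one,
    ← pow_mul, ← pow_add, Nat.div_add_mod]

theorem signedCount_eq_of_sum_pow_eq {K : Type*} [Field K] [CharZero K] {ζ : K} {n : ℕ}
    (hζ : IsPrimitiveRoot ζ (2 ^ (n + 1))) {ι : Type*} {s : Finset ι} {e e' : ι → ℕ}
    (h : ∑ i ∈ s, ζ ^ e i = ∑ i ∈ s, ζ ^ e' i) (k : ℕ) :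
    signedCount n s e k = signedCount n s e' k := by
  rcases lt_or_ge k (2 ^ n) with hk | hk
  · refine sub_eq_zero.1 (hζ.eq_zero_of_sum_pow_eq_zero (c := fun k => _ - _) ?_ hk)
    simp only [Int.cast_sub, sub_mul, sum_sub_distrib, ← hζ.sum_pow_eq_sum_signedCount, h, sub_self]
  · rw [signedCount_of_le s e hk, signedCount_of_le s e' hk]

theorem natCast_card_filter_mod_eq_of_sum_pow_eq {K : Type*} [Field K] [CharZero K] {ζ : K}
    {n : ℕ} (hζ : IsPrimitiveRoot ζ (2 ^ (n + 1))) {ι : Type*} {s : Finset ι} {e e' : ι → ℕ}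
    (h : ∑ i ∈ s, ζ ^ e i = ∑ i ∈ s, ζ ^ e' i) (k : ℕ) :
    (#{i ∈ s | e i % 2 ^ n = k} : ZMod 2) = #{i ∈ s | e' i % 2 ^ n = k} := by
  rw [natCast_card_filter_eq_signedCount, natCast_card_filter_eq_signedCount,
    hζ.signedCount_eq_of_sum_pow_eq h]

end IsPrimitiveRoot

namespace ZMod

theorem isUnit_iff_odd_val {m : ℕ} (hm : 0 < m) (x : ZMod (2 ^ m)) : IsUnit x ↔ Odd x.val := by
  conv_lhs => rw [← natCast_zmod_val x]
  rw [isUnit_natCast_iff_not_dvd_pow Nat.prime_two hm, Nat.odd_iff, Nat.two_dvd_ne_zero]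

theorem card_filter_isUnit_two_pow {m : ℕ} (hm : 0 < m) :
    #{x : ZMod (2 ^ m) | IsUnit x} = 2 ^ (m - 1) := by
  calc #{x : ZMod (2 ^ m) | IsUnit x} = #(univ.map ⟨Units.val, Units.val_injective⟩) := by
        congr 1; ext x; simp; rfl
    _ = 2 ^ (m - 1) := by
        rw [card_map, card_univ, card_units_eq_totient, Nat.totient_prime_pow Nat.prime_two hm]
        simp

theorem card_filter_isUnit_mul_eq_of_isUnit {n : ℕ} [NeZero n] {y : ZMod n} (hy : IsUnit y)
    (c : ZMod n) : #{s | IsUnit s ∧ y * s = c} = if IsUnit c then 1 else 0 := by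
  split_ifs with hc
  · rw [card_eq_one]
    refine ⟨↑hy.unit⁻¹ * c, ?_⟩
    ext s
    simp only [mem_filter, mem_univ, true_and, mem_singleton, Units.eq_inv_mul_iff_mul_eq,
      IsUnit.unit_spec]
    exact ⟨And.right, fun h => ⟨isUnit_of_mul_isUnit_right (h ▸ hc), h⟩⟩
  · rw [card_eq_zero, filter_eq_empty_iff]
    rintro s - ⟨hs, rfl⟩
    exact hc (hy.mul hs)

theorem natCast_card_filter_isUnit_mul_eq_of_not_isUnit {m : ℕ} (hm : 2 ≤ m) {y : ZMod (2 ^ m)}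
    (hy : ¬IsUnit y) (c : ZMod (2 ^ m)) : (#{s | IsUnit s ∧ y * s = c} : ZMod 2) = 0 := by
  have htwo : (2 : ZMod (2 ^ m)) * 2 ^ (m - 1) = 0 := by
    rw [← pow_succ', Nat.sub_add_cancel (by omega)]
    exact_mod_cast natCast_self (2 ^ m)
  have hne : (2 ^ (m - 1) : ZMod (2 ^ m)) ≠ 0 := by
    have : ¬2 ^ m ∣ 2 ^ (m - 1) := by
      rw [Nat.pow_dvd_pow_iff_le_right (by norm_num)]; omega
    exact_mod_cast (natCast_eq_zero_iff _ _).not.2 this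
  have hnil : IsNilpotent (2 ^ (m - 1) : ZMod (2 ^ m)) :=
    IsNilpotent.pow_of_pos ⟨m, by exact_mod_cast natCast_self (2 ^ m)⟩ (by omega)
  have hy_mul : y * 2 ^ (m - 1) = 0 := by
    obtain ⟨k, hk⟩ := Nat.not_odd_iff_even.mp ((isUnit_iff_odd_val (by omega) y).not.mp hy)
    rw [← natCast_zmod_val y, hk]
    push_cast
    linear_combination (k : ZMod (2 ^ m)) * htwo
  rw [card_eq_sum_ones, Nat.cast_sum, Nat.cast_one]
  refine sum_involution (fun s _ => s + 2 ^ (m - 1)) (fun _ _ => rfl)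
    (fun s _ _ => by simpa using hne) (fun s hs => ?_)
    (fun s _ => by rw [add_assoc, ← two_mul, htwo, add_zero])
  simp only [mem_filter, mem_univ, true_and] at hs ⊢
  exact ⟨hnil.isUnit_add_left_of_commute hs.1 (Commute.all _ _),
    by rw [mul_add, hy_mul, add_zero, hs.2]⟩

theorem natCast_card_filter_isUnit_mul_eq {m : ℕ} (hm : 2 ≤ m) (y c : ZMod (2 ^ m)) :
    (#{s | IsUnit s ∧ y * s = c} : ZMod 2) = if IsUnit y ∧ IsUnit c then 1 else 0 := by
  by_cases hy : IsUnit y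
  · simp [card_filter_isUnit_mul_eq_of_isUnit hy, hy]
  · simp [natCast_card_filter_isUnit_mul_eq_of_not_isUnit hm hy, hy]

theorem mul_eq_mul_of_val_mod_two_eq {n : ℕ} [NeZero n] {a b g : ZMod n} (hg : g + g = 0)
    (hab : a.val % 2 = b.val % 2) : a * g = b * g := by
  obtain ⟨z, hz⟩ := Nat.modEq_iff_dvd.1 hab
  have hb := congrArg (Int.cast : ℤ → ZMod n) (eq_add_of_sub_eq' hz)
  push_cast [natCast_zmod_val] at hb
  rw [hb]
  linear_combination (-(z : ZMod n)) * hg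

end ZMod

def reduceMod (j : ℕ) : ZMod (2 ^ j) →+* ZMod (2 ^ (j - 1)) :=
  ZMod.castHom (pow_dvd_pow 2 (Nat.sub_le j 1)) _

theorem reduceMod_val {j : ℕ} (x : ZMod (2 ^ j)) : (reduceMod j x).val = x.val % 2 ^ (j - 1) := by
  rw [reduceMod, ZMod.castHom_apply, ← ZMod.natCast_val, ZMod.val_natCast]

theorem isUnit_reduceMod_iff {j : ℕ} (hj : 2 ≤ j) (x : ZMod (2 ^ j)) :
    IsUnit (reduceMod j x) ↔ Odd x.val := by
  rw [ZMod.isUnit_iff_odd_val (by omega), reduceMod_val, Nat.odd_iff, Nat.odd_iff,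
    Nat.mod_mod_of_dvd _ (dvd_pow_self 2 (by omega))]

section Tset

variable {j : ℕ}

theorem card_Tset_le (hj : 3 ≤ j) : #(Tset j) ≤ 2 ^ (j - 2) := by
  calc #(Tset j) ≤ 2 ^ (j - 3) + 2 ^ (j - 3) :=
        (card_union_le _ _).trans (add_le_add (card_image_le.trans (card_range _).le)
          (card_image_le.trans (card_range _).le))
    _ = 2 ^ (j - 2) := by rw [← two_mul, ← pow_succ']; congr 1; omega

theorem exists_mem_Tset_reduceMod_eq (hj : 3 ≤ j) {s : ZMod (2 ^ (j - 1))} (hs : IsUnit s) :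
    ∃ t ∈ Tset j, reduceMod j t = s := by
  obtain ⟨k, hk⟩ := (ZMod.isUnit_iff_odd_val (by omega) s).1 hs
  have hlt := ZMod.val_lt s
  have hpow : 2 ^ (j - 1) = 4 * 2 ^ (j - 3) := by
    rw [show j - 1 = j - 3 + 2 by omega, pow_add]; ring
  rcases lt_or_ge k (2 ^ (j - 3)) with hkj | hkj
  · refine ⟨_, mem_union_left _ (mem_image_of_mem _ (mem_range.2 hkj)), ?_⟩
    rw [map_natCast, ← hk, ZMod.natCast_zmod_val]
  · have hi : 2 * 2 ^ (j - 3) - 1 - k < 2 ^ (j - 3) := by omega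
    refine ⟨_, mem_union_right _ (mem_image_of_mem _ (mem_range.2 hi)), ?_⟩
    rw [map_neg, map_natCast,
      show 2 * (2 * 2 ^ (j - 3) - 1 - k) + 1 = 2 ^ (j - 1) - s.val by omega, Nat.cast_sub hlt.le,
      ZMod.natCast_self, ZMod.natCast_zmod_val, zero_sub, neg_neg]

theorem image_reduceMod_Tset (hj : 3 ≤ j) :
    (Tset j).image (reduceMod j) = ({s | IsUnit s} : Finset (ZMod (2 ^ (j - 1)))) := by
  refine eq_of_superset_of_card_ge (fun s hs => ?_) ?_
  · obtain ⟨t, ht, rfl⟩ := exists_mem_Tset_reduceMod_eq hj (mem_filter.1 hs).2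
    exact mem_image_of_mem _ ht
  · rw [ZMod.card_filter_isUnit_two_pow (by omega), Nat.sub_sub]
    exact card_image_le.trans (card_Tset_le hj)

theorem injOn_reduceMod_Tset (hj : 3 ≤ j) : Set.InjOn (reduceMod j) (Tset j) := by
  refine card_image_iff.1 (card_image_le.antisymm ?_)
  rw [image_reduceMod_Tset hj, ZMod.card_filter_isUnit_two_pow (by omega), Nat.sub_sub]
  exact card_Tset_le hj

theorem natCast_card_filter_Tset_reduceMod_mul_eq (hj : 3 ≤ j) (x : ZMod (2 ^ j))
    (c : ZMod (2 ^ (j - 1))) :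
    (#{t ∈ Tset j | reduceMod j (x * t) = c} : ZMod 2) =
      if IsUnit (reduceMod j x) ∧ IsUnit c then 1 else 0 := by
  have hcard :
      #{t ∈ Tset j | reduceMod j (x * t) = c} = #{s | IsUnit s ∧ reduceMod j x * s = c} := by
    rw [← filter_filter, ← image_reduceMod_Tset hj, filter_image,
      card_image_of_injOn ((injOn_reduceMod_Tset hj).mono (filter_subset _ _))]
    simp only [map_mul]
  rw [hcard, ZMod.natCast_card_filter_isUnit_mul_eq (by omega)]

end Tset

theorem two_pow_sub_mul_eq_two_pow_sub_iff {N j j₀ w : ℕ} (hj : j ≤ N) (hj₀ : j₀ ≤ N) :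
    2 ^ (N - j) * w = 2 ^ (N - j₀) ↔ j₀ ≤ j ∧ w = 2 ^ (j - j₀) := by
  constructor
  · intro h
    by_cases hle : j₀ ≤ j
    · rw [show N - j₀ = N - j + (j - j₀) by omega, pow_add] at h
      exact ⟨hle, Nat.eq_of_mul_eq_mul_left (by positivity) h⟩
    · rw [show N - j = N - j₀ + (j₀ - j) by omega, pow_add, mul_assoc] at h
      have := Nat.eq_one_of_mul_eq_one_right
        (Nat.eq_of_mul_eq_mul_left (by positivity) (h.trans (mul_one _).symm))
      rw [Nat.pow_eq_one] at this
      omega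
  · rintro ⟨hle, rfl⟩
    rw [← pow_add]
    congr 1
    omega

theorem natCast_card_filter_Tset_two_pow_mul_eq {N j j₀ : ℕ} (hj : 3 ≤ j) (hjN : j ≤ N)
    (hj₀ : 3 ≤ j₀) (hj₀N : j₀ ≤ N) (x : ZMod (2 ^ j)) :
    (#{t ∈ Tset j | 2 ^ (N - j) * (x * t).val % 2 ^ (N - 1) = 2 ^ (N - j₀)} : ZMod 2) =
      if j = j₀ then (x.val : ZMod 2) else 0 := by
  have hmod (v : ℕ) : 2 ^ (N - j) * v % 2 ^ (N - 1) = 2 ^ (N - j) * (v % 2 ^ (j - 1)) := by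
    rw [show N - 1 = N - j + (j - 1) by omega, pow_add, Nat.mul_mod_mul_left]
  simp_rw [hmod, two_pow_sub_mul_eq_two_pow_sub_iff hjN hj₀N, ← reduceMod_val]
  by_cases hle : j₀ ≤ j
  · have hc : 2 ^ (j - j₀) < 2 ^ (j - 1) := Nat.pow_lt_pow_right (by norm_num) (by omega)
    have hiff (y : ZMod (2 ^ (j - 1))) :
        (j₀ ≤ j ∧ y.val = 2 ^ (j - j₀)) ↔ y = ((2 ^ (j - j₀) : ℕ) : ZMod (2 ^ (j - 1))) := by
      rw [and_iff_right hle, ← (ZMod.val_injective _).eq_iff, ZMod.val_natCast_of_lt hc]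
    have hunit : ¬2 ∣ 2 ^ (j - j₀) ↔ j = j₀ :=
      ⟨fun h => by_contra fun hne => h (dvd_pow_self 2 (by omega)), by rintro rfl; simp⟩
    simp_rw [hiff]
    rw [natCast_card_filter_Tset_reduceMod_mul_eq hj]
    simp only [isUnit_reduceMod_iff (by omega : 2 ≤ j),
      ZMod.isUnit_natCast_iff_not_dvd_pow Nat.prime_two (by omega : 0 < j - 1), hunit]
    rcases Nat.even_or_odd x.val with hx | hx
    · simp [Nat.not_odd_iff_even.2 hx, hx.natCast_zmod_two]
    · simp [hx, hx.natCast_zmod_two]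
  · rw [if_neg (by omega)]
    simp [hle]

theorem val_mod_two_eq_of_sum_charSum_eq {J : Finset ℕ} (hJ : ∀ j ∈ J, 3 ≤ j)
    {a b : (j : ℕ) → ZMod (2 ^ j)}
    (hsum : ∑ j ∈ J, charSum j (a j) = ∑ j ∈ J, charSum j (b j)) {j₀ : ℕ} (hj₀ : j₀ ∈ J) :
    (a j₀).val % 2 = (b j₀).val % 2 := by
  set N := J.sup id
  have hJN : ∀ j ∈ J, j ≤ N := fun j hj => le_sup (f := id) hj
  have hζ : IsPrimitiveRoot (omega N) (2 ^ (N - 1 + 1)) := by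
    rw [Nat.sub_add_cancel (by linarith [hJ j₀ hj₀, hJN j₀ hj₀])]
    exact isPrimitiveRoot_omega N
  have hcount (x : (j : ℕ) → ZMod (2 ^ j)) :
      (#{p ∈ J.sigma Tset | 2 ^ (N - p.1) * (x p.1 * p.2).val % 2 ^ (N - 1) = 2 ^ (N - j₀)} :
        ZMod 2) = (x j₀).val := by
    rw [filter_sigma, card_sigma, Nat.cast_sum, sum_congr rfl fun j hj =>
      natCast_card_filter_Tset_two_pow_mul_eq (hJ j hj) (hJN j hj) (hJ j₀ hj₀) (hJN j₀ hj₀) (x j),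
      sum_ite_eq', if_pos hj₀]
  rw [sum_charSum_eq_sum_sigma hJN, sum_charSum_eq_sum_sigma hJN] at hsum
  rw [← ZMod.natCast_eq_natCast_iff', ← hcount a, ← hcount b]
  exact hζ.natCast_card_filter_mod_eq_of_sum_pow_eq hsum _

/-- If two characters `a_J`, `b_J` of `G_J = ⊕_{j∈J} ℤ/2^j` give the same value on the
connection set `S_J = ∪_j T_j`, then each pair `a_j`, `b_j` has the same parity;
consequently `a_J` and `b_J` agree on every involution of `G_J`. -/
theorem stmt_8 (J : Finset ℕ) (hJ : ∀ j ∈ J, 3 ≤ j)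
    (a b : (j : ℕ) → ZMod (2 ^ j))
    (hsum : ∑ j ∈ J, charSum j (a j) = ∑ j ∈ J, charSum j (b j)) :
    (∀ j ∈ J, (a j).val % 2 = (b j).val % 2) ∧
      ∀ g : (j : ℕ) → ZMod (2 ^ j), (∀ j ∈ J, g j + g j = 0) →
        ∏ j ∈ J, omega j ^ ((a j * g j).val) = ∏ j ∈ J, omega j ^ ((b j * g j).val) := by
  have parity : ∀ j ∈ J, (a j).val % 2 = (b j).val % 2 := fun j hj =>
    val_mod_two_eq_of_sum_charSum_eq hJ hsum hj
  refine ⟨parity, fun g hg => prod_congr rfl fun j hj => ?_⟩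
  rw [ZMod.mul_eq_mul_of_val_mod_two_eq (hg j hj) (parity j hj)]
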